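/- For the rectangular staircase partition λ = δ_d ∘ (b^a), the expected down-degree of a uniformly random element of the interval [∅,λ] in Young's lattice equals (d−1)ab/(a+b). -/

import Mathlib

open scoped BigOperators

/-- The down-degree of `p`: the number of elements covered by `p`. -/
noncomputable def downDeg (P : Type*) [PartialOrder P] (p : P) : ℕ :=
  {q : P | q ⋖ p}.ncard

/-- The rectangular staircase Young diagram `δ_d ∘ (b^a)`: row `r` (0-indexed,
for `r < a(d-1)`) has length `b·(d-1-r/a)`. -/
def rectStaircase (d a b : ℕ) : YoungDiagram where
  cells := (Finset.range (a * (d - 1)) ×ˢ Finset.range (b * (d - 1))).filter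
    (fun c => c.2 < b * (d - 1 - c.1 / a))
  isLowerSet := by
    intro x y hle hx
    simp only [Finset.coe_filter, Set.mem_setOf_eq, Finset.mem_product,
      Finset.mem_range] at hx ⊢
    obtain ⟨⟨hx1, hx2⟩, hx3⟩ := hx
    refine ⟨⟨lt_of_le_of_lt hle.1 hx1, lt_of_le_of_lt hle.2 hx2⟩, ?_⟩
    calc y.2 ≤ x.2 := hle.2
      _ < b * (d - 1 - x.1 / a) := hx3
      _ ≤ b * (d - 1 - y.1 / a) :=
        Nat.mul_le_mul_left _ (Nat.sub_le_sub_left (Nat.div_le_div_right hle.1) _)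

/-!
Give the cell `(i, j)` the weight `b * i + a * j - K` with `K = a * b * (d - 1)`. For every
diagram `μ`, the weights of its addable cells minus those of its corner cells telescope row by
row to `(a + b) * (number of corners) - K`. Summed over `μ ⊆ λ`, the contributions of the
addable cells inside `λ` cancel those of the corner cells, since adding and removing the last
cell of a row are inverse bijections. The remaining addable cells are outer corners of `λ`,
and the staircase is balanced: all of its outer corners lie on the line `b * i + a * j = K`,
so they have weight zero. Hence `(a + b) * ∑ downDeg μ = #[∅, λ] * K`.
-/

open Finset

namespace YoungDiagram

theorem rowLen_eq_of_forall_mem_iff {μ : YoungDiagram} {i m : ℕ}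
    (h : ∀ j, (i, j) ∈ μ ↔ j < m) : μ.rowLen i = m := by
  have h₁ := h (μ.rowLen i)
  have h₂ := h m
  rw [mem_iff_lt_rowLen] at h₁ h₂
  omega

theorem le_iff_forall_rowLen_le {μ ν : YoungDiagram} :
    μ ≤ ν ↔ ∀ i, μ.rowLen i ≤ ν.rowLen i := by
  refine ⟨fun h i => ?_, fun h c hc => ?_⟩
  · by_contra! hlt
    have : (i, ν.rowLen i) ∈ ν := h (mem_iff_lt_rowLen.2 hlt)
    exact (mem_iff_lt_rowLen.1 this).false
  · have := mem_iff_lt_rowLen.1 hc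
    exact mem_iff_lt_rowLen.2 (this.trans_le (h c.1))

theorem eq_of_forall_rowLen_eq {μ ν : YoungDiagram} (h : ∀ i, μ.rowLen i = ν.rowLen i) :
    μ = ν :=
  le_antisymm (le_iff_forall_rowLen_le.2 fun i => (h i).le)
    (le_iff_forall_rowLen_le.2 fun i => (h i).ge)

theorem rowLen_colLen_zero (μ : YoungDiagram) : μ.rowLen (μ.colLen 0) = 0 := by
  by_contra h
  exact (mem_iff_lt_colLen.1 (mem_iff_lt_rowLen.2 (Nat.pos_of_ne_zero h))).false

def IsCorner (μ : YoungDiagram) (i : ℕ) : Prop :=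
  μ.rowLen (i + 1) < μ.rowLen i

def IsAddable (μ : YoungDiagram) (i : ℕ) : Prop :=
  i = 0 ∨ μ.rowLen i < μ.rowLen (i - 1)

instance (μ : YoungDiagram) : DecidablePred μ.IsCorner :=
  fun _ => inferInstanceAs (Decidable (_ < _))

instance (μ : YoungDiagram) : DecidablePred μ.IsAddable :=
  fun _ => inferInstanceAs (Decidable (_ ∨ _))

theorem isAddable_succ_iff {μ : YoungDiagram} {i : ℕ} : μ.IsAddable (i + 1) ↔ μ.IsCorner i := by
  simp [IsAddable, IsCorner]

theorem IsAddable.of_le {μ ν : YoungDiagram} {i : ℕ} (h : μ.IsAddable i) (hle : μ ≤ ν)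
    (hi : μ.rowLen i = ν.rowLen i) : ν.IsAddable i :=
  h.imp_right fun h => hi ▸ h.trans_le (le_iff_forall_rowLen_le.1 hle _)

def removeCorner (μ : YoungDiagram) (i : ℕ) (h : μ.IsCorner i) : YoungDiagram where
  cells := μ.cells.erase (i, μ.rowLen i - 1)
  isLowerSet := by
    rintro ⟨k, j⟩ ⟨k', j'⟩ hle hc
    obtain ⟨hk, hj⟩ := Prod.mk_le_mk.1 hle
    simp only [coe_erase, Set.mem_sdiff, mem_coe, mem_cells, Set.mem_singleton_iff,
      Prod.mk.injEq] at hc ⊢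
    refine ⟨μ.up_left_mem hk hj hc.1, ?_⟩
    rintro ⟨rfl, rfl⟩
    have hjk : j < μ.rowLen k := mem_iff_lt_rowLen.1 hc.1
    obtain rfl | hk := hk.eq_or_lt
    · omega
    · have := μ.rowLen_anti (k' + 1) k hk
      have h' : μ.rowLen (k' + 1) < μ.rowLen k' := h
      omega

theorem mem_removeCorner {μ : YoungDiagram} {i : ℕ} {h : μ.IsCorner i} {c : ℕ × ℕ} :
    c ∈ μ.removeCorner i h ↔ c ∈ μ ∧ c ≠ (i, μ.rowLen i - 1) := by
  rw [← mem_cells, and_comm]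
  exact mem_erase

theorem rowLen_removeCorner {μ : YoungDiagram} {i : ℕ} (h : μ.IsCorner i) (k : ℕ) :
    (μ.removeCorner i h).rowLen k = if k = i then μ.rowLen i - 1 else μ.rowLen k := by
  refine rowLen_eq_of_forall_mem_iff fun j => ?_
  rw [mem_removeCorner, mem_iff_lt_rowLen, ne_eq, Prod.mk.injEq]
  obtain rfl | hk := eq_or_ne k i
  · rw [if_pos rfl]; omega
  · rw [if_neg hk]; omega

theorem removeCorner_le {μ : YoungDiagram} {i : ℕ} (h : μ.IsCorner i) : μ.removeCorner i h ≤ μ :=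
  fun _ hc => (mem_removeCorner.1 hc).1

def addCell (μ : YoungDiagram) (i : ℕ) (h : μ.IsAddable i) : YoungDiagram where
  cells := insert (i, μ.rowLen i) μ.cells
  isLowerSet := by
    rintro ⟨k, j⟩ ⟨k', j'⟩ hle hc
    obtain ⟨hk, hj⟩ := Prod.mk_le_mk.1 hle
    simp only [coe_insert, Set.mem_insert_iff, mem_coe, mem_cells, Prod.mk.injEq] at hc ⊢
    obtain ⟨rfl, rfl⟩ | hc := hc
    · rw [mem_iff_lt_rowLen]
      obtain rfl | hk := hk.eq_or_lt
      · omega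
      · have := μ.rowLen_anti k' (k - 1) (by omega)
        have h' : k = 0 ∨ μ.rowLen k < μ.rowLen (k - 1) := h
        omega
    · exact .inr (μ.up_left_mem hk hj hc)

theorem mem_addCell {μ : YoungDiagram} {i : ℕ} {h : μ.IsAddable i} {c : ℕ × ℕ} :
    c ∈ μ.addCell i h ↔ c = (i, μ.rowLen i) ∨ c ∈ μ := by
  rw [← mem_cells]
  exact mem_insert

theorem rowLen_addCell {μ : YoungDiagram} {i : ℕ} (h : μ.IsAddable i) (k : ℕ) :
    (μ.addCell i h).rowLen k = if k = i then μ.rowLen i + 1 else μ.rowLen k := by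
  refine rowLen_eq_of_forall_mem_iff fun j => ?_
  rw [mem_addCell, mem_iff_lt_rowLen, Prod.mk.injEq]
  obtain rfl | hk := eq_or_ne k i
  · rw [if_pos rfl]; omega
  · rw [if_neg hk]; omega

theorem addCell_le_iff {μ ν : YoungDiagram} {i : ℕ} {h : μ.IsAddable i} :
    μ.addCell i h ≤ ν ↔ (i, μ.rowLen i) ∈ ν ∧ μ ≤ ν := by
  rw [← cells_subset_iff, ← cells_subset_iff, ← mem_cells]
  exact insert_subset_iff

theorem isCorner_addCell {μ : YoungDiagram} {i : ℕ} (h : μ.IsAddable i) :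
    (μ.addCell i h).IsCorner i := by
  have := μ.rowLen_anti i (i + 1) (by omega)
  unfold IsCorner
  rw [rowLen_addCell, rowLen_addCell, if_neg (by omega), if_pos rfl]
  omega

theorem isAddable_removeCorner {μ : YoungDiagram} {i : ℕ} (h : μ.IsCorner i) :
    (μ.removeCorner i h).IsAddable i := by
  rcases Nat.eq_zero_or_pos i with rfl | hi
  · exact .inl rfl
  · have := μ.rowLen_anti (i - 1) i (by omega)
    have h' : μ.rowLen (i + 1) < μ.rowLen i := h
    refine .inr ?_
    rw [rowLen_removeCorner, rowLen_removeCorner, if_pos rfl, if_neg (by omega)]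
    omega

theorem removeCorner_addCell {μ : YoungDiagram} {i : ℕ} (h : μ.IsAddable i) :
    (μ.addCell i h).removeCorner i (isCorner_addCell h) = μ :=
  eq_of_forall_rowLen_eq fun k => by
    simp only [rowLen_removeCorner, rowLen_addCell]
    split_ifs with hk <;> simp [hk]

theorem addCell_removeCorner {μ : YoungDiagram} {i : ℕ} (h : μ.IsCorner i) :
    (μ.removeCorner i h).addCell i (isAddable_removeCorner h) = μ :=
  eq_of_forall_rowLen_eq fun k => by
    have h' : μ.rowLen (i + 1) < μ.rowLen i := h
    simp only [rowLen_removeCorner, rowLen_addCell]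
    split_ifs with hk <;> simp [hk]; omega

theorem removeCorner_covBy {μ : YoungDiagram} {i : ℕ} (h : μ.IsCorner i) :
    μ.removeCorner i h ⋖ μ := by
  have h' : μ.rowLen (i + 1) < μ.rowLen i := h
  refine ⟨(removeCorner_le h).lt_of_ne fun heq => ?_, fun ν hlt hgt => ?_⟩
  · have := congrArg (rowLen · i) heq
    rw [rowLen_removeCorner, if_pos rfl] at this
    omega
  obtain ⟨k, hk⟩ : ∃ k, (μ.removeCorner i h).rowLen k < ν.rowLen k := by
    by_contra! hle
    exact hlt.not_ge (le_iff_forall_rowLen_le.2 hle)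
  obtain rfl : k = i := by
    by_contra hki
    rw [rowLen_removeCorner, if_neg hki] at hk
    exact (le_iff_forall_rowLen_le.1 hgt.le k).not_gt hk
  refine hgt.not_ge (le_iff_forall_rowLen_le.2 fun l => ?_)
  obtain rfl | hl := eq_or_ne l k
  · rw [rowLen_removeCorner, if_pos rfl] at hk
    omega
  · simpa only [rowLen_removeCorner, if_neg hl] using le_iff_forall_rowLen_le.1 hlt.le l

theorem covBy_iff_exists_removeCorner {μ ν : YoungDiagram} :
    ν ⋖ μ ↔ ∃ i h, ν = μ.removeCorner i h := by
  refine ⟨fun hν => ?_, ?_⟩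
  swap
  · rintro ⟨i, h, rfl⟩
    exact removeCorner_covBy h
  -- the last row in which `ν` is shorter than `μ` is a corner row of `μ`
  have hνμ := le_iff_forall_rowLen_le.1 hν.le
  set S := (range (μ.colLen 0)).filter fun i => ν.rowLen i < μ.rowLen i
  have hS : ∀ i, ν.rowLen i < μ.rowLen i → i ∈ S := fun i hi => by
    have := μ.rowLen_colLen_zero
    have := μ.rowLen_anti (μ.colLen 0) i
    simp only [S, mem_filter, mem_range]
    omega
  obtain ⟨i₀, hi₀⟩ : ∃ i, ν.rowLen i < μ.rowLen i := by
    by_contra! hle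
    exact hν.lt.not_ge (le_iff_forall_rowLen_le.2 hle)
  obtain ⟨i, hiS, hmax⟩ := S.exists_max_image id ⟨i₀, hS i₀ hi₀⟩
  have hi : ν.rowLen i < μ.rowLen i := (mem_filter.1 hiS).2
  have hcorner : μ.IsCorner i := by
    have := ν.rowLen_anti i (i + 1) (by omega)
    by_contra! hc
    have hc' : μ.rowLen i ≤ μ.rowLen (i + 1) := not_lt.1 hc
    exact Nat.not_succ_le_self i (hmax (i + 1) (hS _ (by omega)))
  have hle : ν ≤ μ.removeCorner i hcorner := le_iff_forall_rowLen_le.2 fun k => by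
    obtain rfl | hk := eq_or_ne k i
    · rw [rowLen_removeCorner, if_pos rfl]
      omega
    · rw [rowLen_removeCorner, if_neg hk]
      exact hνμ k
  exact ⟨i, hcorner, hle.lt_or_eq.resolve_left fun hlt => hν.2 hlt (removeCorner_covBy hcorner).1⟩

theorem sum_isAddable_sub_sum_isCorner {R : Type*} [CommRing R] (μ : YoungDiagram) {n : ℕ}
    (hn : μ.rowLen n = 0) (a b K : R) :
    ∑ i ∈ range (n + 1), (if μ.IsAddable i then b * i + a * μ.rowLen i - K else 0) -
        ∑ i ∈ range (n + 1), (if μ.IsCorner i then b * i + a * (μ.rowLen i - 1 : ℕ) - K else 0) =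
      (a + b) * #((range n).filter μ.IsCorner) - K := by
  set A : ℕ → R := fun i => if μ.IsAddable i then b * i + a * μ.rowLen i - K else 0
  set C : ℕ → R := fun i => if μ.IsCorner i then b * i + a * (μ.rowLen i - 1 : ℕ) - K else 0
  have hA : A 0 = a * μ.rowLen 0 - K := by simp [A, IsAddable]
  have hC : C n = 0 := if_neg fun h => by
    have h' : μ.rowLen (n + 1) < μ.rowLen n := h
    omega
  -- the sums telescope once the addable row `i + 1` is paired with row `i`
  have hstep (i : ℕ) : A (i + 1) - C i =
      (a + b) * (if μ.IsCorner i then 1 else 0) + a * (μ.rowLen (i + 1) - μ.rowLen i) := by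
    simp only [A, C, isAddable_succ_iff]
    split_ifs with h
    · have h' : μ.rowLen (i + 1) < μ.rowLen i := h
      push_cast [Nat.cast_sub (by omega : 1 ≤ μ.rowLen i)]
      ring
    · have h' : μ.rowLen (i + 1) = μ.rowLen i := by
        have := μ.rowLen_anti i (i + 1) (by omega)
        have h'' : ¬μ.rowLen (i + 1) < μ.rowLen i := h
        omega
      rw [h']
      ring
  change ∑ i ∈ range (n + 1), A i - ∑ i ∈ range (n + 1), C i = _
  rw [sum_range_succ' A, sum_range_succ C, hC, hA, add_zero]
  calc _ = ∑ i ∈ range n, (A (i + 1) - C i) + (a * μ.rowLen 0 - K) := by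
        rw [sum_sub_distrib]
        ring
    _ = _ := by
        simp_rw [hstep]
        rw [sum_add_distrib, ← mul_sum, ← mul_sum, sum_boole,
          sum_range_sub (fun i => (μ.rowLen i : R)), hn]
        push_cast
        ring

section Interval

variable {Λ : YoungDiagram}

instance : Finite {μ : YoungDiagram // μ ≤ Λ} :=
  Finite.of_injective
    (fun μ => (⟨μ.1.cells, mem_powerset.2 (cells_subset_iff.2 μ.2)⟩ : Λ.cells.powerset))
    fun _ _ h => Subtype.ext (YoungDiagram.ext (congrArg Subtype.val h))

noncomputable instance : Fintype {μ : YoungDiagram // μ ≤ Λ} := Fintype.ofFinite _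

theorem downDeg_eq_card_isCorner (x : {μ : YoungDiagram // μ ≤ Λ}) {N : ℕ}
    (hN : x.1.rowLen N = 0) :
    downDeg {μ : YoungDiagram // μ ≤ Λ} x = #((range N).filter x.1.IsCorner) := by
  have hcov (q : {μ : YoungDiagram // μ ≤ Λ}) : q ⋖ x ↔ q.1 ⋖ x.1 :=
    (Set.OrdConnected.apply_covBy_apply_iff (OrderEmbedding.subtype (· ≤ Λ))
      (by simpa using! Set.ordConnected_Iic)).symm
  rw [downDeg, ← Set.ncard_coe_finset]
  symm
  refine Set.ncard_congr
    (fun i hi => ⟨_, (removeCorner_le (mem_filter.1 hi).2).trans x.2⟩)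
    (fun i hi => (hcov _).2 (removeCorner_covBy (mem_filter.1 hi).2))
    (fun i j hi hj h => ?_) (fun q hq => ?_)
  · by_contra hij
    have := congrArg (fun q : {μ : YoungDiagram // μ ≤ Λ} => q.1.rowLen i) h
    have hi : x.1.rowLen (i + 1) < x.1.rowLen i := (mem_filter.1 hi).2
    simp only [rowLen_removeCorner, if_true, if_neg hij] at this
    omega
  · obtain ⟨i, h, hqi⟩ := covBy_iff_exists_removeCorner.1 ((hcov q).1 hq)
    refine ⟨i, mem_filter.2 ⟨mem_range.2 ?_, h⟩, Subtype.ext hqi.symm⟩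
    by_contra! hi
    have := x.1.rowLen_anti N i hi
    have h' : x.1.rowLen (i + 1) < x.1.rowLen i := h
    omega

theorem sum_ite_isAddable_eq_sum_ite_isCorner {M : Type*} [AddCommMonoid M] (g : ℕ × ℕ → M)
    (i : ℕ) :
    ∑ μ : {μ : YoungDiagram // μ ≤ Λ},
        (if μ.1.IsAddable i ∧ (i, μ.1.rowLen i) ∈ Λ then g (i, μ.1.rowLen i) else 0) =
      ∑ μ : {μ : YoungDiagram // μ ≤ Λ},
        (if μ.1.IsCorner i then g (i, μ.1.rowLen i - 1) else 0) := by
  rw [← sum_filter, ← sum_filter]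
  refine sum_bij'
    (fun μ hμ => ⟨μ.1.addCell i (mem_filter.1 hμ).2.1,
      addCell_le_iff.2 ⟨(mem_filter.1 hμ).2.2, μ.2⟩⟩)
    (fun μ hμ => ⟨μ.1.removeCorner i (mem_filter.1 hμ).2,
      (removeCorner_le (mem_filter.1 hμ).2).trans μ.2⟩)
    (fun μ hμ => mem_filter.2 ⟨mem_univ _, isCorner_addCell (mem_filter.1 hμ).2.1⟩)
    (fun μ hμ => ?_)
    (fun μ hμ => Subtype.ext (removeCorner_addCell (mem_filter.1 hμ).2.1))
    (fun μ hμ => Subtype.ext (addCell_removeCorner (mem_filter.1 hμ).2))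
    (fun μ hμ => by simp only [rowLen_addCell, if_true, Nat.add_sub_cancel])
  have h := (mem_filter.1 hμ).2
  have h' : μ.1.rowLen (i + 1) < μ.1.rowLen i := h
  refine mem_filter.2 ⟨mem_univ _, isAddable_removeCorner h, μ.2 ?_⟩
  rw [rowLen_removeCorner, if_pos rfl, mem_iff_lt_rowLen]
  omega

theorem add_mul_sum_downDeg_eq_card_mul {R : Type*} [CommRing R] (a b K : R)
    (hΛ : ∀ i, Λ.IsAddable i → b * i + a * Λ.rowLen i = K) :
    (a + b) * ∑ μ : {μ : YoungDiagram // μ ≤ Λ}, (downDeg {μ : YoungDiagram // μ ≤ Λ} μ : R) =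
      Fintype.card {μ : YoungDiagram // μ ≤ Λ} * K := by
  set n := Λ.colLen 0
  have hn (μ : {μ : YoungDiagram // μ ≤ Λ}) : μ.1.rowLen n = 0 :=
    Nat.eq_zero_of_le_zero (Λ.rowLen_colLen_zero ▸ le_iff_forall_rowLen_le.1 μ.2 n)
  set g : ℕ × ℕ → R := fun c => b * c.1 + a * c.2 - K
  have hμ (μ : {μ : YoungDiagram // μ ≤ Λ}) :
      (a + b) * (downDeg {μ : YoungDiagram // μ ≤ Λ} μ : R) - K =
        ∑ i ∈ range (n + 1),
            (if μ.1.IsAddable i ∧ (i, μ.1.rowLen i) ∈ Λ then g (i, μ.1.rowLen i) else 0) -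
          ∑ i ∈ range (n + 1), (if μ.1.IsCorner i then g (i, μ.1.rowLen i - 1) else 0) := by
    rw [downDeg_eq_card_isCorner μ (hn μ), ← sum_isAddable_sub_sum_isCorner μ.1 (hn μ) a b K]
    congr 1
    refine sum_congr rfl fun i _ => ?_
    -- an addable cell of `μ` outside `Λ` is an outer corner of `Λ`, of weight zero
    by_cases hi : (i, μ.1.rowLen i) ∈ Λ
    · simp only [hi, and_true, g]
    by_cases hadd : μ.1.IsAddable i
    · have heq : μ.1.rowLen i = Λ.rowLen i :=
        le_antisymm (le_iff_forall_rowLen_le.1 μ.2 i) (not_lt.1 (hi ∘ mem_iff_lt_rowLen.2))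
      rw [if_pos hadd, if_neg (hi ·.2), heq, hΛ i (hadd.of_le μ.2 heq), sub_self]
    · rw [if_neg hadd, if_neg (hadd ·.1)]
  -- toggling the cell at the end of row `i` matches addable cells inside `Λ` with corners
  have hsum : ∑ μ : {μ : YoungDiagram // μ ≤ Λ},
      ((a + b) * (downDeg {μ : YoungDiagram // μ ≤ Λ} μ : R) - K) = 0 := by
    simp_rw [hμ, sum_sub_distrib]
    rw [sub_eq_zero, sum_comm, eq_comm, sum_comm]
    exact sum_congr rfl fun i _ => (sum_ite_isAddable_eq_sum_ite_isCorner g i).symm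
  rwa [sum_sub_distrib, ← mul_sum, sum_const, card_univ, nsmul_eq_mul, sub_eq_zero] at hsum

end Interval

end YoungDiagram

open YoungDiagram

theorem mem_rectStaircase {d a b i j : ℕ} (ha : 0 < a) :
    (i, j) ∈ rectStaircase d a b ↔ j < b * (d - 1 - i / a) := by
  change (i, j) ∈ (range (a * (d - 1)) ×ˢ range (b * (d - 1))).filter _ ↔ _
  simp only [mem_filter, mem_product, mem_range, and_iff_right_iff_imp]
  intro h
  have hpos : 0 < d - 1 - i / a := Nat.pos_of_ne_zero fun h0 => by simp [h0] at h
  refine ⟨?_, h.trans_le (Nat.mul_le_mul_left b (Nat.sub_le _ _))⟩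
  rw [mul_comm, ← Nat.div_lt_iff_lt_mul ha]
  omega

theorem rowLen_rectStaircase {d a b : ℕ} (ha : 0 < a) (i : ℕ) :
    (rectStaircase d a b).rowLen i = b * (d - 1 - i / a) :=
  rowLen_eq_of_forall_mem_iff fun _ => mem_rectStaircase ha

theorem rectStaircase_balanced {d a b i : ℕ} (ha : 0 < a)
    (h : (rectStaircase d a b).IsAddable i) :
    b * i + a * (rectStaircase d a b).rowLen i = a * b * (d - 1) := by
  simp only [IsAddable, rowLen_rectStaircase ha] at h ⊢
  obtain ⟨q, rfl, hq⟩ : ∃ q, i = a * q ∧ q ≤ d - 1 := by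
    rcases h with rfl | h
    · exact ⟨0, by simp, by omega⟩
    obtain _ | k := i
    · simp at h
    rw [Nat.add_sub_cancel] at h
    have hlt := Nat.lt_of_mul_lt_mul_left h
    have hdvd : a ∣ k + 1 := by
      by_contra hnd
      rw [Nat.succ_div_of_not_dvd hnd] at hlt
      exact lt_irrefl _ hlt
    have := Nat.succ_div_of_dvd hdvd
    exact ⟨(k + 1) / a, (Nat.mul_div_cancel' hdvd).symm, by omega⟩
  rw [Nat.mul_div_cancel_left q ha]
  calc b * (a * q) + a * (b * (d - 1 - q)) = a * b * (q + (d - 1 - q)) := by ring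
    _ = a * b * (d - 1) := by rw [Nat.add_sub_cancel' hq]

theorem stmt10_general (d a b : ℕ) (hd : 1 ≤ d) (ha : 0 < a) :
    (∑ᶠ μ : {μ : YoungDiagram // μ ≤ rectStaircase d a b},
        (downDeg {μ : YoungDiagram // μ ≤ rectStaircase d a b} μ : ℚ)) /
      (Nat.card {μ : YoungDiagram // μ ≤ rectStaircase d a b} : ℚ) =
      ((d : ℚ) - 1) * a * b / (a + b) := by
  have hbal (i : ℕ) (hi : (rectStaircase d a b).IsAddable i) :
      (b : ℚ) * i + a * (rectStaircase d a b).rowLen i = ((d : ℚ) - 1) * a * b := by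
    have := congrArg (Nat.cast : ℕ → ℚ) (rectStaircase_balanced ha hi)
    push_cast [Nat.cast_sub hd] at this
    linear_combination this
  have key := add_mul_sum_downDeg_eq_card_mul (a : ℚ) b _ hbal
  have hcard : (0 : ℚ) < Fintype.card {μ : YoungDiagram // μ ≤ rectStaircase d a b} :=
    Nat.cast_pos.2 (Fintype.card_pos_iff.2 ⟨⟨⊥, bot_le⟩⟩)
  have hab : (0 : ℚ) < a + b := add_pos_of_pos_of_nonneg (Nat.cast_pos.2 ha) (Nat.cast_nonneg b)
  rw [finsum_eq_sum_of_fintype, Nat.card_eq_fintype_card, div_eq_div_iff hcard.ne' hab.ne']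
  linear_combination key

/-- For the rectangular staircase `λ = δ_d ∘ (b^a)`, the expected down-degree of a
uniformly random element of the interval `[∅, λ]` in Young's lattice is `(d-1)ab/(a+b)`. -/
theorem stmt10 (d a b : ℕ) (hd : 1 ≤ d) (ha : 0 < a) (hb : 0 < b) :
    (∑ᶠ μ : {μ : YoungDiagram // μ ≤ rectStaircase d a b},
        (downDeg {μ : YoungDiagram // μ ≤ rectStaircase d a b} μ : ℚ)) /
      (Nat.card {μ : YoungDiagram // μ ≤ rectStaircase d a b} : ℚ) =
      ((d : ℚ) - 1) * a * b / (a + b) :=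
  stmt10_general d a b hd ha
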